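/- Let Q be a bounded idempotent operator (Q² = Q) on a Hilbert space H. Then the Moore-Penrose inverse of Q equals P_{N(Q)^⊥} P_{R(Q)}, the composition of the orthogonal projection onto R(Q) followed by the orthogonal projection onto N(Q)^⊥. -/

import Mathlib

open ContinuousLinearMap

/-- `P` is the orthogonal projection onto the closed subspace `S`: a selfadjoint
idempotent with range `S`. -/
def IsOrthoProj {E : Type*} [NormedAddCommGroup E] [InnerProductSpace ℂ E] [CompleteSpace E]
    (P : E →L[ℂ] E) (S : Submodule ℂ E) : Prop :=
  IsIdempotentElem P ∧ IsSelfAdjoint P ∧ LinearMap.range (P : E →ₗ[ℂ] E) = S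

/-- `X` is the Moore–Penrose inverse of `T`: the four Penrose equations hold. -/
def IsMoorePenrose {E F : Type*} [NormedAddCommGroup E] [InnerProductSpace ℂ E] [CompleteSpace E]
    [NormedAddCommGroup F] [InnerProductSpace ℂ F] [CompleteSpace F]
    (T : E →L[ℂ] F) (X : F →L[ℂ] E) : Prop :=
  T ∘L X ∘L T = T ∧ X ∘L T ∘L X = X ∧
    IsSelfAdjoint (T ∘L X) ∧ IsSelfAdjoint (X ∘L T)

variable {H : Type*} [NormedAddCommGroup H] [InnerProductSpace ℂ H] [CompleteSpace H]

/-! Both projections absorb `Q` on either side: `Q P₁ = Q` and `P₁ Q = P₁` because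
`ker Q` is closed and contains the range of `Q - 1`, while `Q P₂ = P₂` and `P₂ Q = Q` because
`Q` and `P₂` are idempotents with the same range. Hence `Q (P₁ P₂) = P₂` and `(P₁ P₂) Q = P₁`
are selfadjoint, and the remaining Penrose equations follow from the absorption identities. -/

namespace IsOrthoProj

variable {P : H →L[ℂ] H} {S : Submodule ℂ H}

theorem exists_eq_starProjection (h : IsOrthoProj P S) :
    ∃ _ : S.HasOrthogonalProjection, P = S.starProjection := by
  obtain ⟨hidem, hsa, rfl⟩ := h
  exact isStarProjection_iff_eq_starProjection_range.mp ⟨hidem, hsa⟩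

theorem apply_eq_zero_iff (h : IsOrthoProj P S) {x : H} : P x = 0 ↔ x ∈ Sᗮ := by
  obtain ⟨_, rfl⟩ := h.exists_eq_starProjection
  exact S.starProjection_apply_eq_zero_iff

theorem sub_apply_mem_orthogonal (h : IsOrthoProj P S) (x : H) : x - P x ∈ Sᗮ := by
  obtain ⟨_, rfl⟩ := h.exists_eq_starProjection
  exact Submodule.sub_starProjection_mem_orthogonal x

theorem comp_eq_of_range_le (h : IsOrthoProj P S) {F : Type*} [TopologicalSpace F]
    [AddCommGroup F] [Module ℂ F] {T : F →L[ℂ] H} (hT : LinearMap.range (T : F →ₗ[ℂ] H) ≤ S) :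
    P ∘L T = T :=
  coe_injective <|
    (LinearMap.IsIdempotentElem.comp_eq_right_iff h.1.toLinearMap _).mpr (h.2.2 ▸ hT)

theorem comp_eq_of_orthogonal_ker {F : Type*} [NormedAddCommGroup F] [NormedSpace ℂ F]
    {T : H →L[ℂ] F} (h : IsOrthoProj P (LinearMap.ker (T : H →ₗ[ℂ] F))ᗮ) : T ∘L P = T := by
  ext x
  have hx := h.sub_apply_mem_orthogonal x
  rw [Submodule.orthogonal_orthogonal_eq_closure,
    T.isClosed_ker.submodule_topologicalClosure_eq, LinearMap.mem_ker, map_sub, sub_eq_zero] at hx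
  exact hx.symm

theorem comp_eq_self_of_isIdempotentElem {Q : H →L[ℂ] H} (hQ : IsIdempotentElem Q)
    (h : IsOrthoProj P (LinearMap.ker (Q : H →ₗ[ℂ] H))ᗮ) : P ∘L Q = P := by
  ext x
  have hker : Q x - x ∈ LinearMap.ker (Q : H →ₗ[ℂ] H) := by
    rw [LinearMap.mem_ker, map_sub, sub_eq_zero]
    exact congr($hQ.eq x)
  simpa [sub_eq_zero] using h.apply_eq_zero_iff.mpr (Submodule.le_orthogonal_orthogonal _ hker)

end IsOrthoProj

theorem isMoorePenrose_comp_of_comp_eq {Q P₁ P₂ : H →L[ℂ] H}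
    (hP₁ : IsSelfAdjoint P₁) (hP₂ : IsSelfAdjoint P₂)
    (hQP₁ : Q ∘L P₁ = Q) (hP₁Q : P₁ ∘L Q = P₁) (hQP₂ : Q ∘L P₂ = P₂) (hP₂Q : P₂ ∘L Q = Q) :
    IsMoorePenrose Q (P₁ ∘L P₂) := by
  have hP₂P₂ : P₂ ∘L P₂ = P₂ :=
    calc P₂ ∘L P₂ = P₂ ∘L Q ∘L P₂ := by rw [hQP₂]
      _ = P₂ := by rw [← comp_assoc, hP₂Q, hQP₂]
  have hQX : Q ∘L P₁ ∘L P₂ = P₂ := by rw [← comp_assoc, hQP₁, hQP₂]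
  have hXQ : (P₁ ∘L P₂) ∘L Q = P₁ := by rw [comp_assoc, hP₂Q, hP₁Q]
  refine ⟨?_, ?_, ?_, ?_⟩
  · rw [hXQ, hQP₁]
  · rw [hQX, comp_assoc, hP₂P₂]
  · rwa [hQX]
  · rwa [hXQ]

theorem idempotent_moorePenrose (Q : H →L[ℂ] H) (hQ : IsIdempotentElem Q)
    (P1 P2 : H →L[ℂ] H)
    (hP1 : IsOrthoProj P1 (LinearMap.ker (Q : H →ₗ[ℂ] H))ᗮ)
    (hP2 : IsOrthoProj P2 (LinearMap.range (Q : H →ₗ[ℂ] H))) :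
    IsMoorePenrose Q (P1 ∘L P2) := by
  have hQP2 : Q ∘L P2 = P2 :=
    coe_injective <|
      (LinearMap.IsIdempotentElem.comp_eq_right_iff hQ.toLinearMap _).mpr hP2.2.2.le
  exact isMoorePenrose_comp_of_comp_eq hP1.2.1 hP2.2.1 hP1.comp_eq_of_orthogonal_ker
    (hP1.comp_eq_self_of_isIdempotentElem hQ) hQP2 (hP2.comp_eq_of_range_le le_rfl)
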